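/- Combining the Gauss formula with Petrunin's averaging: if an immersed m-manifold X in Y satisfies Sc_{|m}(Y) ≥ σ on all tangent m-planes, then at every point Sc(X) ≥ σ − (m(m+2)/2)·Π, where Π is the spherical average of ‖II(τ,τ)‖² over unit tangent vectors τ; in particular Sc(X) ≥ σ − (m(m+2)/2)·(curv⊥)². -/

import Mathlib

/-!
Averaging over the unit sphere with an orthogonally invariant probability measure, the fourth
moments are those of an isotropic tensor: `∫ xᵢ xⱼ xₖ xₗ = e (δᵢⱼδₖₗ + δᵢₖδⱼₗ + δᵢₗδⱼₖ)`. A coordinate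
reflection kills every moment in which some index occurs once, and a reflection mixing two
coordinates ties `∫ xᵢ⁴` to `∫ xᵢ² xⱼ²`. Contracting the tensor against `A ⊗ A` gives
`∫ (xᵀ A x)² = e ((tr A)² + 2 ‖A‖²)`, and `A = 1` fixes `e = 1 / (m (m + 2))`: this is Petrunin's
identity. Substituting it into the Gauss formula leaves `σ - (m (m + 2) / 2) Π ≤ Sc(X)` up to the
nonnegative term `(3/2) ∑ⱼ Mⱼ²`, and `Π ≤ C²` pointwise on the sphere.
-/

open Finset Matrix MeasureTheory

namespace Matrix

variable {n R : Type*} [Fintype n] [DecidableEq n] [Field R]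

def householder (v : n → R) : Matrix n n R :=
  1 - (2 / (v ⬝ᵥ v)) • vecMulVec v v

theorem householder_mulVec (v x : n → R) :
    householder v *ᵥ x = x - (2 * (v ⬝ᵥ x) / (v ⬝ᵥ v)) • v := by
  rw [householder, sub_mulVec, one_mulVec, smul_mulVec, vecMulVec_mulVec, op_smul_eq_smul,
    smul_smul, div_mul_eq_mul_div]

theorem householder_mem_orthogonalGroup {v : n → R} (hv : v ⬝ᵥ v ≠ 0) :
    householder v ∈ orthogonalGroup n R := by
  rw [mem_orthogonalGroup_iff]
  have hT : (householder v)ᵀ = householder v := by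
    simp [householder, transpose_sub, transpose_smul]
  have hP : vecMulVec v v * vecMulVec v v = (v ⬝ᵥ v) • vecMulVec v v := by
    rw [vecMulVec_mul_vecMulVec, vecMulVec_smul]
  rw [hT, householder, sub_mul, mul_sub, mul_sub, smul_mul_smul, hP]
  simp only [one_mul, mul_one, smul_smul]
  rw [show 2 / (v ⬝ᵥ v) * (2 / (v ⬝ᵥ v)) * (v ⬝ᵥ v) = 2 / (v ⬝ᵥ v) + 2 / (v ⬝ᵥ v) by
    field_simp; ring]
  module

theorem measurableEmbedding_mulVec_of_mem_orthogonalGroup {O : Matrix n n ℝ}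
    (hO : O ∈ orthogonalGroup n ℝ) : MeasurableEmbedding (O *ᵥ · : (n → ℝ) → n → ℝ) := by
  have hl : Function.LeftInverse (Oᵀ *ᵥ ·) (O *ᵥ ·) := fun x => by
    simp [mulVec_mulVec, (mem_orthogonalGroup_iff' n ℝ).mp hO]
  have hr : Function.RightInverse (Oᵀ *ᵥ ·) (O *ᵥ ·) := fun x => by
    simp [mulVec_mulVec, (mem_orthogonalGroup_iff n ℝ).mp hO]
  exact .of_measurable_inverse (by fun_prop)
    (by rw [hr.surjective.range_eq]; exact .univ) (by fun_prop) hl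

theorem sum_mul_mul_isotropic {A : Matrix n n ℝ} (hA : A.IsSymm) :
    ∑ i, ∑ j, ∑ k, ∑ l, A i j * A k l *
      ((if i = j then 1 else 0) * (if k = l then 1 else 0) +
        (if i = k then 1 else 0) * (if j = l then 1 else 0) +
        (if i = l then 1 else 0) * (if j = k then 1 else 0)) =
      A.trace ^ 2 + 2 * ∑ i, ∑ j, A i j ^ 2 := by
  have htr : A.trace ^ 2 = ∑ i, ∑ k, A i i * A k k := by
    rw [sq, trace, sum_mul_sum]; rfl
  rw [htr]
  simp only [mul_ite, mul_one, mul_zero, mul_add, sum_add_distrib, sum_ite_eq, mem_univ,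
    ↓reduceIte, hA.apply, sum_ite_irrel, sum_const_zero, sq]
  ring

omit [DecidableEq n] in
theorem sq_dotProduct_mulVec (A : Matrix n n ℝ) (x : n → ℝ) :
    (x ⬝ᵥ A *ᵥ x) ^ 2 = ∑ i, ∑ j, ∑ k, ∑ l, A i j * A k l * (x i * x j * x k * x l) := by
  have hq : x ⬝ᵥ A *ᵥ x = ∑ i, ∑ j, A i j * (x i * x j) := by
    simp only [dotProduct, mulVec, mul_sum]
    exact sum_congr rfl fun i _ => sum_congr rfl fun j _ => by ring
  rw [hq, sq, sum_mul_sum]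
  refine sum_congr rfl fun i _ => ?_
  rw [sum_comm]
  simp only [sum_mul_sum]
  exact sum_congr rfl fun j _ => sum_congr rfl fun k _ => sum_congr rfl fun l _ => by ring

end Matrix

namespace MeasureTheory.Measure

def IsOrthogonallyInvariant {n : Type*} [Fintype n] [DecidableEq n] (μ : Measure (n → ℝ)) :
    Prop :=
  ∀ O ∈ orthogonalGroup n ℝ, MeasurePreserving (O *ᵥ ·) μ μ

end MeasureTheory.Measure

section UnitSphere

variable {n : Type*} [Fintype n] {μ : Measure (n → ℝ)}

theorem isCompact_setOf_sum_sq_eq_one : IsCompact {x : n → ℝ | ∑ i, x i ^ 2 = 1} := by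
  refine Metric.isCompact_of_isClosed_isBounded (isClosed_eq (by fun_prop) continuous_const) ?_
  refine (Metric.isBounded_closedBall (x := 0) (r := 1)).subset fun x hx => ?_
  rw [mem_closedBall_zero_iff, pi_norm_le_iff_of_nonneg zero_le_one]
  intro i
  rw [Real.norm_eq_abs, ← sq_le_one_iff_abs_le_one, ← hx]
  exact single_le_sum (fun j _ => sq_nonneg (x j)) (mem_univ i)

theorem integrable_of_ae_sum_sq_eq_one [IsFiniteMeasure μ] (hsph : ∀ᵐ x ∂μ, ∑ i, x i ^ 2 = 1)
    {f : (n → ℝ) → ℝ} (hf : Continuous f) : Integrable f μ := by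
  rw [← Measure.restrict_eq_self_of_ae_mem hsph]
  exact hf.continuousOn.integrableOn_compact isCompact_setOf_sum_sq_eq_one

noncomputable def fourthMoment (μ : Measure (n → ℝ)) (i j k l : n) : ℝ :=
  ∫ x, x i * x j * x k * x l ∂μ

omit [Fintype n] in
theorem fourthMoment_perm (μ : Measure (n → ℝ)) (i j k l : n) :
    fourthMoment μ i j k l = fourthMoment μ j i k l ∧
      fourthMoment μ i j k l = fourthMoment μ i k j l ∧
      fourthMoment μ i j k l = fourthMoment μ i j l k := by
  refine ⟨?_, ?_, ?_⟩ <;> exact integral_congr_ae (.of_forall fun x => by ring)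

theorem integral_sq_dotProduct_mulVec [IsFiniteMeasure μ] (hsph : ∀ᵐ x ∂μ, ∑ i, x i ^ 2 = 1)
    (A : Matrix n n ℝ) :
    ∫ x, (x ⬝ᵥ A *ᵥ x) ^ 2 ∂μ =
      ∑ i, ∑ j, ∑ k, ∑ l, A i j * A k l * fourthMoment μ i j k l := by
  simp (disch := intros; exact integrable_of_ae_sum_sq_eq_one hsph (by fun_prop)) only
    [sq_dotProduct_mulVec, integral_finsetSum, integral_const_mul, fourthMoment]

variable [DecidableEq n]

theorem integral_comp_mulVec (hμ : μ.IsOrthogonallyInvariant) {O : Matrix n n ℝ}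
    (hO : O ∈ orthogonalGroup n ℝ) (f : (n → ℝ) → ℝ) :
    ∫ x, f (O *ᵥ x) ∂μ = ∫ x, f x ∂μ :=
  (hμ O hO).integral_comp (measurableEmbedding_mulVec_of_mem_orthogonalGroup hO) f

theorem integral_eq_zero_of_comp_mulVec_eq_neg (hμ : μ.IsOrthogonallyInvariant)
    {O : Matrix n n ℝ} (hO : O ∈ orthogonalGroup n ℝ) {f : (n → ℝ) → ℝ}
    (hf : ∀ x, f (O *ᵥ x) = -f x) : ∫ x, f x ∂μ = 0 := by
  have h := integral_comp_mulVec hμ hO f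
  simp only [hf, integral_neg] at h
  linarith

theorem fourthMoment_eq_zero (hμ : μ.IsOrthogonallyInvariant) {i j k l : n}
    (hj : j ≠ i) (hk : k ≠ i) (hl : l ≠ i) : fourthMoment μ i j k l = 0 := by
  have hflip : ∀ x : n → ℝ, householder (Pi.single i 1) *ᵥ x = Function.update x i (-x i) := by
    intro x
    ext s
    rcases eq_or_ne s i with rfl | hs
    · simp [householder_mulVec, two_mul]
    · simp [householder_mulVec, hs]
  refine integral_eq_zero_of_comp_mulVec_eq_neg hμ
    (householder_mem_orthogonalGroup (v := Pi.single i 1) (by simp)) fun x => ?_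
  simp [hflip, hj, hk, hl]

theorem fourthMoment_rotation [IsFiniteMeasure μ] (hsph : ∀ᵐ x ∂μ, ∑ i, x i ^ 2 = 1)
    (hμ : μ.IsOrthogonallyInvariant) {i j : n} (hij : i ≠ j) :
    17 * fourthMoment μ i i i i = 8 * fourthMoment μ j j j j + 27 * fourthMoment μ i i j j := by
  -- The reflection along `eᵢ + 2 eⱼ` sends `xᵢ` to `(3 xᵢ - 4 xⱼ) / 5`.
  set v : n → ℝ := Pi.single i 1 + Pi.single j 2
  have hv : v ⬝ᵥ v = 5 := by
    norm_num [v, dotProduct_add, dotProduct_single, hij, hij.symm]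
  have hHi : ∀ x, (householder v *ᵥ x) i = (3 * x i - 4 * x j) / 5 := fun x => by
    rw [householder_mulVec, hv]
    simp only [v, add_dotProduct, single_dotProduct, one_mul, smul_add, Pi.sub_apply, Pi.add_apply,
      Pi.smul_apply, Pi.single_eq_same, smul_eq_mul, mul_one, ne_eq, hij.symm, not_false_eq_true,
      Pi.single_eq_of_ne', mul_zero, add_zero]
    ring
  have hexpand : ∀ x : n → ℝ, (householder v *ᵥ x) i * (householder v *ᵥ x) i *
      (householder v *ᵥ x) i * (householder v *ᵥ x) i =
      81 / 625 * (x i * x i * x i * x i) + 864 / 625 * (x i * x i * x j * x j) +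
      256 / 625 * (x j * x j * x j * x j) - 432 / 625 * (x j * x i * x i * x i) -
      768 / 625 * (x i * x j * x j * x j) := fun x => by
    rw [hHi]; ring
  have key := integral_comp_mulVec hμ (householder_mem_orthogonalGroup (v := v) (by simp [hv]))
    (fun x => x i * x i * x i * x i)
  simp (disch := exact integrable_of_ae_sum_sq_eq_one hsph (by fun_prop)) only
    [hexpand, integral_add, integral_sub, integral_const_mul] at key
  have hodd₁ := fourthMoment_eq_zero (μ := μ) hμ hij hij hij
  have hodd₂ := fourthMoment_eq_zero (μ := μ) hμ hij.symm hij.symm hij.symm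
  unfold fourthMoment at hodd₁ hodd₂ ⊢
  linarith

theorem exists_fourthMoment_eq [IsFiniteMeasure μ] (hsph : ∀ᵐ x ∂μ, ∑ i, x i ^ 2 = 1)
    (hμ : μ.IsOrthogonallyInvariant) :
    ∃ e : ℝ, ∀ i j k l : n, fourthMoment μ i j k l =
      e * ((if i = j then 1 else 0) * (if k = l then 1 else 0) +
        (if i = k then 1 else 0) * (if j = l then 1 else 0) +
        (if i = l then 1 else 0) * (if j = k then 1 else 0)) := by
  rcases isEmpty_or_nonempty n with hn | ⟨⟨i₀⟩⟩
  · exact ⟨0, fun i => isEmptyElim i⟩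
  have hswap : ∀ a b : n, fourthMoment μ a a b b = fourthMoment μ b b a a := fun a b =>
    integral_congr_ae (.of_forall fun x => by ring)
  have hdiag : ∀ a : n, fourthMoment μ a a a a = fourthMoment μ i₀ i₀ i₀ i₀ := by
    intro a
    rcases eq_or_ne a i₀ with rfl | ha
    · rfl
    have h₁ := fourthMoment_rotation hsph hμ ha
    have h₂ := fourthMoment_rotation hsph hμ ha.symm
    linarith [hswap a i₀]
  refine ⟨fourthMoment μ i₀ i₀ i₀ i₀ / 3, ?_⟩
  have hpair : ∀ a b : n, fourthMoment μ a a b b =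
      fourthMoment μ i₀ i₀ i₀ i₀ / 3 * (1 + 2 * if a = b then 1 else 0) := by
    intro a b
    rcases eq_or_ne a b with rfl | hab
    · rw [hdiag, if_pos rfl]; ring
    · have := fourthMoment_rotation hsph hμ hab
      rw [hdiag a, hdiag b] at this
      rw [if_neg hab]; linarith
  have hodd : ∀ a b c d : n, b ≠ a → c ≠ a → d ≠ a → fourthMoment μ a b c d = 0 :=
    fun _ _ _ _ => fourthMoment_eq_zero hμ
  have hperm := fourthMoment_perm μ
  -- An index occurring exactly once kills the moment; otherwise the indices pair up.
  grind

theorem exists_integral_sq_dotProduct_mulVec [IsFiniteMeasure μ]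
    (hsph : ∀ᵐ x ∂μ, ∑ i, x i ^ 2 = 1) (hμ : μ.IsOrthogonallyInvariant) :
    ∃ e : ℝ, ∀ A : Matrix n n ℝ, A.IsSymm →
      ∫ x, (x ⬝ᵥ A *ᵥ x) ^ 2 ∂μ = e * (A.trace ^ 2 + 2 * ∑ i, ∑ j, A i j ^ 2) := by
  obtain ⟨e, he⟩ := exists_fourthMoment_eq hsph hμ
  refine ⟨e, fun A hA => ?_⟩
  simp_rw [integral_sq_dotProduct_mulVec hsph, he, mul_left_comm _ e, ← mul_sum]
  rw [sum_mul_mul_isotropic hA]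

theorem card_mul_integral_sq_dotProduct_mulVec [IsProbabilityMeasure μ]
    (hsph : ∀ᵐ x ∂μ, ∑ i, x i ^ 2 = 1) (hμ : μ.IsOrthogonallyInvariant)
    {A : Matrix n n ℝ} (hA : A.IsSymm) :
    Fintype.card n * (Fintype.card n + 2) * ∫ x, (x ⬝ᵥ A *ᵥ x) ^ 2 ∂μ =
      A.trace ^ 2 + 2 * ∑ i, ∑ j, A i j ^ 2 := by
  obtain ⟨e, he⟩ := exists_integral_sq_dotProduct_mulVec hsph hμ
  have hnorm : (1 : ℝ) = e * (Fintype.card n ^ 2 + 2 * Fintype.card n) := by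
    have h := he 1 isSymm_one
    rw [integral_congr_ae (g := fun _ => (1 : ℝ)) (hsph.mono fun x hx => by
      simp only [one_mulVec, dotProduct, ← sq, hx, one_pow])] at h
    simpa [one_apply, sq] using h
  rw [he A hA]
  linear_combination -(A.trace ^ 2 + 2 * ∑ i, ∑ j, A i j ^ 2) * hnorm

end UnitSphere

theorem stmt_14_general (m k : ℕ)
    (II : Fin k → Matrix (Fin m) (Fin m) ℝ) (hsym : ∀ j, (II j).IsSymm)
    (μ : Measure (Fin m → ℝ)) [IsProbabilityMeasure μ]
    (hsupp : μ {x | ∑ i, x i ^ 2 ≠ 1} = 0)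
    (hinv : ∀ O ∈ Matrix.orthogonalGroup (Fin m) ℝ,
      MeasurePreserving (fun x => O.mulVec x) μ μ)
    (ScX ScY σ : ℝ) (hσ : σ ≤ ScY)
    (hGauss : ScX = ScY + (∑ j, (II j).trace ^ 2)
        - ∑ j, ∑ i₁, ∑ i₂, (II j i₁ i₂) ^ 2)
    (C : ℝ)
    (hcurv : ∀ τ : Fin m → ℝ, ∑ i, τ i ^ 2 = 1 →
      ∑ j, (τ ⬝ᵥ (II j).mulVec τ) ^ 2 ≤ C ^ 2) :
    σ - ((m : ℝ) * (m + 2) / 2) *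
        (∑ j, ∫ τ, (τ ⬝ᵥ (II j).mulVec τ) ^ 2 ∂μ) ≤ ScX ∧
    σ - ((m : ℝ) * (m + 2) / 2) * C ^ 2 ≤ ScX := by
  have hsph : ∀ᵐ x ∂μ, ∑ i, x i ^ 2 = 1 := ae_iff.mpr hsupp
  have hpetrunin : ((m : ℝ) * (m + 2) / 2) * ∑ j, ∫ τ, (τ ⬝ᵥ (II j).mulVec τ) ^ 2 ∂μ =
      (∑ j, (II j).trace ^ 2) / 2 + ∑ j, ∑ i₁, ∑ i₂, (II j i₁ i₂) ^ 2 := by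
    rw [mul_sum, sum_div, ← sum_add_distrib]
    refine sum_congr rfl fun j _ => ?_
    have hj := card_mul_integral_sq_dotProduct_mulVec hsph hinv (hsym j)
    rw [Fintype.card_fin] at hj
    linear_combination hj / 2
  have hmean : ∑ j, ∫ τ, (τ ⬝ᵥ (II j).mulVec τ) ^ 2 ∂μ ≤ C ^ 2 := by
    rw [← integral_finsetSum _ fun j _ => integrable_of_ae_sum_sq_eq_one hsph (by fun_prop)]
    calc ∫ τ, ∑ j, (τ ⬝ᵥ (II j).mulVec τ) ^ 2 ∂μ ≤ ∫ _, C ^ 2 ∂μ :=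
          integral_mono_ae (integrable_of_ae_sum_sq_eq_one hsph (by fun_prop))
            (integrable_const _) (hsph.mono hcurv)
      _ = C ^ 2 := by simp
  have hM : 0 ≤ ∑ j, (II j).trace ^ 2 := sum_nonneg fun j _ => sq_nonneg _
  refine ⟨by linarith, ?_⟩
  linarith [mul_le_mul_of_nonneg_left hmean (by positivity : (0 : ℝ) ≤ (m : ℝ) * (m + 2) / 2)]

/-- Gauss formula combined with Petrunin's averaging: if `Sc_{|m}(Y) ≥ σ`, then
`Sc(X) ≥ σ − (m(m+2)/2)·Π`, where `Π` is the spherical average of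
`‖II(τ,τ)‖²`; in particular `Sc(X) ≥ σ − (m(m+2)/2)·(curv⊥)²`. -/
theorem stmt_14 (m k : ℕ) (hm : 1 ≤ m)
    (II : Fin k → Matrix (Fin m) (Fin m) ℝ) (hsym : ∀ j, (II j).IsSymm)
    (μ : Measure (Fin m → ℝ)) [IsProbabilityMeasure μ]
    (hsupp : μ {x | ∑ i, x i ^ 2 ≠ 1} = 0)
    (hinv : ∀ O ∈ Matrix.orthogonalGroup (Fin m) ℝ,
      MeasurePreserving (fun x => O.mulVec x) μ μ)
    (ScX ScY σ : ℝ) (hσ : σ ≤ ScY)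
    (hGauss : ScX = ScY + (∑ j, (II j).trace ^ 2)
        - ∑ j, ∑ i₁, ∑ i₂, (II j i₁ i₂) ^ 2)
    (C : ℝ) (hC : 0 ≤ C)
    (hcurv : ∀ τ : Fin m → ℝ, ∑ i, τ i ^ 2 = 1 →
      ∑ j, (τ ⬝ᵥ (II j).mulVec τ) ^ 2 ≤ C ^ 2) :
    σ - ((m : ℝ) * (m + 2) / 2) *
        (∑ j, ∫ τ, (τ ⬝ᵥ (II j).mulVec τ) ^ 2 ∂μ) ≤ ScX ∧
    σ - ((m : ℝ) * (m + 2) / 2) * C ^ 2 ≤ ScX :=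
  stmt_14_general m k II hsym μ hsupp hinv ScX ScY σ hσ hGauss C hcurv
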